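/- Let p > 1 and ζ > 3(1 − 1/p). There exists a constant C > 0 such that for all a, b : ℤ³ → [0,∞], the convolution (a⋆b)(k) := ∑_{l∈ℤ³} a(k−l) b(l) satisfies ‖a⋆b‖_{ζ,p} ≤ C ‖a‖_{ζ,p} ‖b‖_{ζ,p}; that is, the weighted space of nonnegative sequences on ℤ³ with norm ‖·‖_{ζ,p} is an algebra under convolution. -/

import Mathlib

open scoped ENNReal

/-!
Write `ω = ⟨·⟩^ζ` and `q = p/(p-1)`. Splitting
`ω(k) a(k-l) b(l) = [ω(k-l) a(k-l) · ω(l) b(l)] · [ω(k) / (ω(k-l) ω(l))]` and applying Hölder's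
inequality in `l` bounds `(ω(k) (a⋆b)(k))^p` by
`(∑_l (ωa)^p(k-l) (ωb)^p(l)) · (∑_l (ω(k) / (ω(k-l) ω(l)))^q)^{p/q}`.
Summed over `k`, the first factor gives `‖a‖^p ‖b‖^p` (Young's inequality in `ℓ¹`). The second is
bounded uniformly in `k`: with `s = ζq`, the triangle inequality `⟨k⟩ ≤ ⟨k-l⟩ + ⟨l⟩` gives
`(⟨k⟩ / (⟨k-l⟩⟨l⟩))^s ≤ 2^{s-1} (⟨k-l⟩^{-s} + ⟨l⟩^{-s})`, which is summable in `l` because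
`s > 3` is exactly `ζ > 3(1 - 1/p)`.
-/

/-- The Japanese bracket `⟨k⟩ = (1 + |k|²)^{1/2}` of a lattice point `k ∈ ℤ³`,
where `|k|` is the Euclidean norm. -/
noncomputable def jap (k : Fin 3 → ℤ) : ℝ := Real.sqrt (1 + ∑ i, ((k i : ℝ)) ^ 2)

/-- The Japanese bracket, viewed in `[0,∞]`. -/
noncomputable def japE (k : Fin 3 → ℤ) : ℝ≥0∞ := ENNReal.ofReal (jap k)

/-- The weighted norm `‖a‖_{ζ,p} = (∑_{k∈ℤ³} ⟨k⟩^{ζp} a(k)^p)^{1/p}`, possibly `+∞`. -/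
noncomputable def wnorm (ζ p : ℝ) (a : (Fin 3 → ℤ) → ℝ≥0∞) : ℝ≥0∞ :=
  (∑' k, japE k ^ (ζ * p) * a k ^ p) ^ (1 / p)

/-- The convolution `(a ⋆ b)(k) = ∑_{l∈ℤ³} a(k-l) b(l)` of `a, b : ℤ³ → [0,∞]`. -/
noncomputable def conv (a b : (Fin 3 → ℤ) → ℝ≥0∞) (k : Fin 3 → ℤ) : ℝ≥0∞ :=
  ∑' l, a (k - l) * b l

namespace ENNReal

theorem inner_le_Lp_mul_Lq_tsum {ι : Type*} (f g : ι → ℝ≥0∞) {p q : ℝ}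
    (hpq : p.HolderConjugate q) :
    ∑' i, f i * g i ≤ (∑' i, f i ^ p) ^ (1 / p) * (∑' i, g i ^ q) ^ (1 / q) := by
  rw [ENNReal.tsum_eq_iSup_sum]
  refine iSup_le fun s => (inner_le_Lp_mul_Lq s f g hpq).trans ?_
  have := hpq.pos
  have := hpq.symm.pos
  gcongr <;> exact ENNReal.sum_le_tsum s

theorem tsum_tsum_mul_sub {G : Type*} [AddCommGroup G] (a b : G → ℝ≥0∞) :
    ∑' k, ∑' l, a (k - l) * b l = (∑' m, a m) * ∑' m, b m := by
  rw [ENNReal.tsum_comm, ← ENNReal.tsum_mul_left]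
  refine tsum_congr fun l => ?_
  rw [ENNReal.tsum_mul_right]
  exact congrArg (· * b l) ((Equiv.subRight l).tsum_eq a)

theorem div_mul_rpow_le_of_le_add {x y z : ℝ≥0∞} (hx₀ : x ≠ 0) (hx : x ≠ ⊤) (hy₀ : y ≠ 0)
    (hy : y ≠ ⊤) (h : z ≤ x + y) {s : ℝ} (hs : 1 ≤ s) :
    (z / (x * y)) ^ s ≤ 2 ^ (s - 1) * (x ^ (-s) + y ^ (-s)) := by
  have hinv : (x + y) / (x * y) = y⁻¹ + x⁻¹ := by
    rw [ENNReal.add_div, ENNReal.div_eq_inv_mul, ENNReal.div_eq_inv_mul,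
      ENNReal.mul_inv (.inl hx₀) (.inl hx), mul_right_comm, ENNReal.inv_mul_cancel hx₀ hx,
      one_mul, mul_assoc, ENNReal.inv_mul_cancel hy₀ hy, mul_one, add_comm]
  calc (z / (x * y)) ^ s ≤ (y⁻¹ + x⁻¹) ^ s := by
        rw [← hinv]; gcongr
    _ ≤ 2 ^ (s - 1) * ((y⁻¹) ^ s + (x⁻¹) ^ s) := rpow_add_le_mul_rpow_add_rpow _ _ hs
    _ = 2 ^ (s - 1) * (x ^ (-s) + y ^ (-s)) := by
        rw [ENNReal.inv_rpow, ENNReal.inv_rpow, ENNReal.rpow_neg, ENNReal.rpow_neg, add_comm]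

end ENNReal

section WeightedYoung

variable {G : Type*} [AddCommGroup G]

theorem tsum_rpow_div_mul_rpow_le {w : G → ℝ≥0∞} (hw₀ : ∀ k, w k ≠ 0) (hw : ∀ k, w k ≠ ⊤)
    (hsub : ∀ k l, w k ≤ w (k - l) + w l) {ζ q : ℝ} (hζ : 0 ≤ ζ) (hs : 1 ≤ ζ * q) (k : G) :
    ∑' l, (w k ^ ζ / (w (k - l) ^ ζ * w l ^ ζ)) ^ q
      ≤ 2 ^ (ζ * q - 1) * (2 * ∑' m, w m ^ (-(ζ * q))) := by
  calc ∑' l, (w k ^ ζ / (w (k - l) ^ ζ * w l ^ ζ)) ^ q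
      = ∑' l, (w k / (w (k - l) * w l)) ^ (ζ * q) := by
        refine tsum_congr fun l => ?_
        rw [← ENNReal.mul_rpow_of_nonneg _ _ hζ, ← ENNReal.div_rpow_of_nonneg _ _ hζ,
          ENNReal.rpow_mul]
    _ ≤ ∑' l, 2 ^ (ζ * q - 1) * (w (k - l) ^ (-(ζ * q)) + w l ^ (-(ζ * q))) :=
        ENNReal.tsum_le_tsum fun l => ENNReal.div_mul_rpow_le_of_le_add (hw₀ _) (hw _) (hw₀ _)
          (hw _) (hsub k l) hs
    _ = 2 ^ (ζ * q - 1) * (2 * ∑' m, w m ^ (-(ζ * q))) := by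
        rw [ENNReal.tsum_mul_left, ENNReal.tsum_add, two_mul]
        exact congrArg (fun S => 2 ^ (ζ * q - 1) * (S + _))
          ((Equiv.subLeft k).tsum_eq fun m => w m ^ (-(ζ * q)))

variable {ω : G → ℝ≥0∞} (hω₀ : ∀ k, ω k ≠ 0) (hω : ∀ k, ω k ≠ ⊤) {p q : ℝ}
  (hpq : p.HolderConjugate q) (a b : G → ℝ≥0∞)
include hω₀ hω hpq

theorem rpow_mul_tsum_mul_sub_le (k : G) :
    (ω k * ∑' l, a (k - l) * b l) ^ p
      ≤ (∑' l, (ω (k - l) * a (k - l)) ^ p * (ω l * b l) ^ p)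
        * (∑' l, (ω k / (ω (k - l) * ω l)) ^ q) ^ (p / q) := by
  have hp := hpq.pos
  have hsplit : ω k * ∑' l, a (k - l) * b l
      = ∑' l, (ω (k - l) * a (k - l) * (ω l * b l)) * (ω k / (ω (k - l) * ω l)) := by
    rw [← ENNReal.tsum_mul_left]
    refine tsum_congr fun l => ?_
    have hne₀ : ω (k - l) * ω l ≠ 0 := mul_ne_zero (hω₀ _) (hω₀ _)
    have hne : ω (k - l) * ω l ≠ ⊤ := ENNReal.mul_ne_top (hω _) (hω _)
    calc ω k * (a (k - l) * b l)
        = ω k / (ω (k - l) * ω l) * (ω (k - l) * ω l) * (a (k - l) * b l) := by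
          rw [ENNReal.div_mul_cancel hne₀ hne]
      _ = _ := by ring
  calc (ω k * ∑' l, a (k - l) * b l) ^ p
      ≤ ((∑' l, (ω (k - l) * a (k - l) * (ω l * b l)) ^ p) ^ (1 / p)
          * (∑' l, (ω k / (ω (k - l) * ω l)) ^ q) ^ (1 / q)) ^ p := by
        rw [hsplit]; gcongr; exact ENNReal.inner_le_Lp_mul_Lq_tsum _ _ hpq
    _ = _ := by
        rw [ENNReal.mul_rpow_of_nonneg _ _ hp.le, ← ENNReal.rpow_mul, ← ENNReal.rpow_mul,
          one_div_mul_cancel hp.ne', ENNReal.rpow_one, one_div_mul_eq_div]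
        simp_rw [ENNReal.mul_rpow_of_nonneg _ _ hp.le]

theorem tsum_rpow_mul_tsum_mul_sub_le {M : ℝ≥0∞}
    (hM : ∀ k, ∑' l, (ω k / (ω (k - l) * ω l)) ^ q ≤ M) :
    ∑' k, (ω k * ∑' l, a (k - l) * b l) ^ p
      ≤ M ^ (p / q) * ((∑' k, (ω k * a k) ^ p) * ∑' k, (ω k * b k) ^ p) := by
  have hpq₀ : 0 ≤ p / q := div_nonneg hpq.pos.le hpq.symm.pos.le
  calc ∑' k, (ω k * ∑' l, a (k - l) * b l) ^ p
      ≤ ∑' k, (∑' l, (ω (k - l) * a (k - l)) ^ p * (ω l * b l) ^ p) * M ^ (p / q) :=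
        ENNReal.tsum_le_tsum fun k =>
          (rpow_mul_tsum_mul_sub_le hω₀ hω hpq a b k).trans (by gcongr; exact hM k)
    _ = _ := by
        rw [ENNReal.tsum_mul_right, mul_comm,
          ENNReal.tsum_tsum_mul_sub (fun m => (ω m * a m) ^ p) (fun m => (ω m * b m) ^ p)]

end WeightedYoung

theorem Real.sqrt_one_add_norm_add_sq_le {E : Type*} [SeminormedAddCommGroup E] (x y : E) :
    √(1 + ‖x + y‖ ^ 2) ≤ √(1 + ‖x‖ ^ 2) + √(1 + ‖y‖ ^ 2) := by
  have hx : ‖x‖ ≤ √(1 + ‖x‖ ^ 2) := Real.le_sqrt_of_sq_le (by linarith)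
  have hy : ‖y‖ ≤ √(1 + ‖y‖ ^ 2) := Real.le_sqrt_of_sq_le (by linarith)
  have hx2 := Real.sq_sqrt (by positivity : (0 : ℝ) ≤ 1 + ‖x‖ ^ 2)
  have hy2 := Real.sq_sqrt (by positivity : (0 : ℝ) ≤ 1 + ‖y‖ ^ 2)
  have hxy := norm_add_le x y
  rw [Real.sqrt_le_left (by positivity)]
  nlinarith [norm_nonneg x, norm_nonneg y, norm_nonneg (x + y)]

def euclideanOfInt {d : ℕ} (k : Fin d → ℤ) : EuclideanSpace ℝ (Fin d) :=
  WithLp.toLp 2 (fun i => (k i : ℝ))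

theorem euclideanOfInt_ne_zero {d : ℕ} {k : Fin d → ℤ} (hk : k ≠ 0) : euclideanOfInt k ≠ 0 := by
  intro h
  refine hk (funext fun i => ?_)
  simpa [euclideanOfInt] using congrArg (· i) h

theorem summable_norm_euclideanOfInt_rpow {d : ℕ} {r : ℝ} (hr : r < -d) :
    Summable fun m : Fin d → ℤ => ‖euclideanOfInt m‖ ^ r := by
  let b := (EuclideanSpace.basisFun (Fin d) ℝ).toBasis
  let e := (b.restrictScalars ℤ).equivFun.symm
  have he : ∀ m, ((e m : Submodule.span ℤ (Set.range b)) : EuclideanSpace ℝ (Fin d))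
      = euclideanOfInt m := by
    intro m
    simp only [e, Module.Basis.equivFun_symm_apply, Submodule.coe_sum, Submodule.coe_smul_of_tower,
      Module.Basis.restrictScalars_apply]
    ext i
    simp [b, euclideanOfInt, Pi.single_apply]
  have hrank : Module.finrank ℤ (Submodule.span ℤ (Set.range b)) = d := by
    rw [ZLattice.rank ℝ, finrank_euclideanSpace_fin]
  have := (ZLattice.summable_norm_rpow _ r (by rwa [hrank])).comp_injective e.injective
  simpa [Function.comp_def, ← he] using this

theorem jap_eq (k : Fin 3 → ℤ) : jap k = √(1 + ‖euclideanOfInt k‖ ^ 2) := by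
  simp [jap, euclideanOfInt, EuclideanSpace.real_norm_sq_eq]

theorem norm_euclideanOfInt_le_jap (k : Fin 3 → ℤ) : ‖euclideanOfInt k‖ ≤ jap k := by
  rw [jap_eq]
  exact Real.le_sqrt_of_sq_le (by linarith)

theorem jap_pos (k : Fin 3 → ℤ) : 0 < jap k := by
  rw [jap_eq]
  positivity

theorem japE_ne_zero (k : Fin 3 → ℤ) : japE k ≠ 0 :=
  (ENNReal.ofReal_pos.mpr (jap_pos k)).ne'

theorem japE_ne_top (k : Fin 3 → ℤ) : japE k ≠ ⊤ := ENNReal.ofReal_ne_top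

theorem japE_le_japE_sub_add (k l : Fin 3 → ℤ) : japE k ≤ japE (k - l) + japE l := by
  have h : euclideanOfInt (k - l) + euclideanOfInt l = euclideanOfInt k := by
    ext i
    simp [euclideanOfInt]
  rw [japE, japE, japE, ← ENNReal.ofReal_add (jap_pos _).le (jap_pos _).le, jap_eq, jap_eq,
    jap_eq, ← h]
  exact ENNReal.ofReal_le_ofReal (Real.sqrt_one_add_norm_add_sq_le _ _)

theorem tsum_japE_rpow_neg_ne_top {s : ℝ} (hs : 3 < s) : ∑' k, japE k ^ (-s) ≠ ⊤ := by
  have hsum : Summable fun k => jap k ^ (-s) := by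
    refine (summable_norm_euclideanOfInt_rpow (d := 3) (r := -s) (by push_cast; linarith))
      |>.of_norm_bounded_eventually ?_
    filter_upwards [Filter.eventually_cofinite_ne 0] with k hk
    rw [Real.norm_of_nonneg (Real.rpow_nonneg (jap_pos k).le _)]
    exact Real.rpow_le_rpow_of_nonpos (norm_pos_iff.mpr (euclideanOfInt_ne_zero hk))
      (norm_euclideanOfInt_le_jap k) (by linarith)
  simp_rw [japE, ENNReal.ofReal_rpow_of_pos (jap_pos _)]
  rw [← ENNReal.ofReal_tsum_of_nonneg (fun k => Real.rpow_nonneg (jap_pos k).le _) hsum]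
  exact ENNReal.ofReal_ne_top

theorem wnorm_eq {ζ p : ℝ} (hp : 0 ≤ p) (f : (Fin 3 → ℤ) → ℝ≥0∞) :
    wnorm ζ p f = (∑' k, (japE k ^ ζ * f k) ^ p) ^ (1 / p) := by
  simp_rw [wnorm, ENNReal.mul_rpow_of_nonneg _ _ hp, ← ENNReal.rpow_mul]

theorem wnorm_conv_le {ζ p q : ℝ} (hpq : p.HolderConjugate q) (hs : 1 ≤ ζ * q)
    (a b : (Fin 3 → ℤ) → ℝ≥0∞) :
    wnorm ζ p (conv a b)
      ≤ (2 ^ (ζ * q - 1) * (2 * ∑' m, japE m ^ (-(ζ * q)))) ^ (1 / q)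
        * wnorm ζ p a * wnorm ζ p b := by
  have hp := hpq.pos
  have hq := hpq.symm.pos
  have hζ : 0 ≤ ζ := by
    by_contra! h
    nlinarith
  have key := tsum_rpow_mul_tsum_mul_sub_le (ω := fun k => japE k ^ ζ)
    (fun k => (ENNReal.rpow_pos (pos_iff_ne_zero.mpr (japE_ne_zero k)) (japE_ne_top k)).ne')
    (fun k => ENNReal.rpow_ne_top_of_nonneg hζ (japE_ne_top k)) hpq a b
    (tsum_rpow_div_mul_rpow_le japE_ne_zero japE_ne_top japE_le_japE_sub_add hζ hs)
  set M := 2 ^ (ζ * q - 1) * (2 * ∑' m, japE m ^ (-(ζ * q)))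
  clear_value M
  have hexp : p / q * (1 / p) = 1 / q := by field_simp
  rw [wnorm_eq hp.le, wnorm_eq hp.le, wnorm_eq hp.le]
  calc (∑' k, (japE k ^ ζ * conv a b k) ^ p) ^ (1 / p)
      ≤ (M ^ (p / q) * ((∑' k, (japE k ^ ζ * a k) ^ p) * ∑' k, (japE k ^ ζ * b k) ^ p))
          ^ (1 / p) := by
        gcongr
        exact key
    _ = _ := by
        rw [ENNReal.mul_rpow_of_nonneg _ _ (by positivity),
          ENNReal.mul_rpow_of_nonneg _ _ (by positivity), ← ENNReal.rpow_mul, hexp, mul_assoc]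

/-- Let `p > 1` and `ζ > 3(1 - 1/p)`.  There is a constant `C > 0` such that for all
`a, b : ℤ³ → [0,∞]`, `‖a ⋆ b‖_{ζ,p} ≤ C ‖a‖_{ζ,p} ‖b‖_{ζ,p}`: the weighted space of
nonnegative sequences on `ℤ³` is an algebra under convolution. -/
theorem stmt4 (p ζ : ℝ) (hp : 1 < p) (hζ : 3 * (1 - 1 / p) < ζ) :
    ∃ C : ℝ, 0 < C ∧ ∀ a b : (Fin 3 → ℤ) → ℝ≥0∞,
      wnorm ζ p (conv a b) ≤ ENNReal.ofReal C * wnorm ζ p a * wnorm ζ p b := by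
  have hpq : p.HolderConjugate (p / (p - 1)) := .conjExponent hp
  set q := p / (p - 1)
  have hs : 3 < ζ * q := by
    rwa [one_div, hpq.one_sub_inv, ← div_eq_mul_inv, div_lt_iff₀ hpq.symm.pos] at hζ
  set M := 2 ^ (ζ * q - 1) * (2 * ∑' m, japE m ^ (-(ζ * q)))
  have hM : M ^ (1 / q) ≠ ⊤ := by
    refine ENNReal.rpow_ne_top_of_nonneg (by positivity) (ENNReal.mul_ne_top ?_ ?_)
    · exact ENNReal.rpow_ne_top_of_nonneg (by linarith) ENNReal.ofNat_ne_top
    · exact ENNReal.mul_ne_top ENNReal.ofNat_ne_top (tsum_japE_rpow_neg_ne_top hs)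
  refine ⟨(M ^ (1 / q)).toReal + 1, by positivity, fun a b =>
    (wnorm_conv_le hpq (by linarith) a b).trans ?_⟩
  gcongr
  exact (ENNReal.le_ofReal_iff_toReal_le hM (by positivity)).mpr (by linarith)
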